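/- Suppose the highest ℓ-weight ψ has all zeroes and poles in q^ℤ, i.e. ψ_i(z) = c_i·∏_{s∈ℤ}(1 − q^s/z)^{l_{i,s}} / ∏_{s∈ℤ}(1 − q^s/z)^{m_{i,s}} with c_i ∈ 𝕂* and l_{i,s}, m_{i,s} ∈ ℕ almost all zero, let 1/ψ^den denote the highest ℓ-weight (∏_{s∈ℤ}(1 − q^s/z)^{−m_{i,s}})_{i∈I}, set Δ_𝐥 := ∏_{i∈I}∏_{a=1}^{n_i}∏_{s∈ℤ}(1 − q^s/z_{ia})^{l_{i,s}} ∈ 𝒱_𝐧, and suppose every entry x_{ia} of 𝐱 is an integer power of q. Then multiplication by Δ_𝐥 induces a 𝕂-linear isomorphism S_𝐧/(S_𝐧 ∩ Θ(ψ)_𝐱) ≅ (Δ_𝐥·S_𝐧) / ((Δ_𝐥·S_𝐧) ∩ Θ(1/ψ^den)_𝐱). -/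

import Mathlib

open scoped BigOperators

/-! ### Iterated Laurent series -/

noncomputable def ILaux (K : Type) [Field K] : ℕ → Σ' (T : Type), Field T
  | 0 => ⟨K, inferInstance⟩
  | n+1 => ⟨@LaurentSeries (ILaux K n).1 (letI := (ILaux K n).2; inferInstance),
            letI := (ILaux K n).2; inferInstance⟩

noncomputable instance ILaux.instField (K : Type) [Field K] (n : ℕ) : Field (ILaux K n).1 :=
  (ILaux K n).2

/-- `IterLaurent K n` is the `n`-fold iterated Laurent series field
`K((t_n))((t_{n-1}))⋯((t_1))`, with `t_1` the innermost variable in the notation. -/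
noncomputable def IterLaurent (K : Type) [Field K] (n : ℕ) : Type := (ILaux K n).1

noncomputable instance IterLaurent.instField (K : Type) [Field K] (n : ℕ) :
    Field (IterLaurent K n) := (ILaux K n).2

/-- The variable `t_a` of the iterated Laurent series field. -/
noncomputable def tvar (K : Type) [Field K] : (n : ℕ) → Fin n → IterLaurent K n
  | n+1, ⟨0, _⟩ => (HahnSeries.single (1:ℤ) (1 : IterLaurent K n) : LaurentSeries (IterLaurent K n))
  | n+1, ⟨a+1, _h⟩ => (HahnSeries.C (tvar K n ⟨a, by omega⟩) : LaurentSeries (IterLaurent K n))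

/-- Iterated extraction of the coefficient of `t_1⁻¹ t_2⁻¹ ⋯ t_n⁻¹`. -/
noncomputable def ires (K : Type) [Field K] : (n : ℕ) → IterLaurent K n → K
  | 0, x => x
  | n+1, x => ires K n ((x : LaurentSeries (IterLaurent K n)).coeff (-1))

/-- Constants embed into the iterated Laurent series field. -/
noncomputable def constIL (K : Type) [Field K] : (n : ℕ) → (K →+* IterLaurent K n)
  | 0 => RingHom.id K
  | n+1 => ((HahnSeries.C : IterLaurent K n →+* LaurentSeries (IterLaurent K n)).comp (constIL K n))

/-! ### Laurent polynomials -/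

/-- The ring of Laurent polynomials over `K` in variables indexed by `ι`. -/
noncomputable abbrev LaurentPoly (K : Type) [CommRing K] (ι : Type) : Type :=
  AddMonoidAlgebra K (ι →₀ ℤ)

/-- Evaluation of a Laurent polynomial at (invertible) values `v` in a field `L`,
transporting coefficients along `φ`. -/
noncomputable def lpEval {K L ι : Type} [CommRing K] [Field L] (φ : K →+* L) (v : ι → L)
    (F : LaurentPoly K ι) : L :=
  F.coeff.sum fun d c => φ c * d.prod fun a k => v a ^ k

/-- Renaming of variables of a Laurent polynomial along a bijection. -/
noncomputable def lpRename {K : Type} [CommRing K] {ι κ : Type} (e : ι ≃ κ) :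
    LaurentPoly K ι ≃ₐ[K] LaurentPoly K κ :=
  AddMonoidAlgebra.domCongr K K (Finsupp.domCongr e)

/-- The variable `z_c` as a Laurent polynomial. -/
noncomputable def lpVar {K : Type} [CommRing K] {ι : Type} (c : ι) : LaurentPoly K ι :=
  AddMonoidAlgebra.single (Finsupp.single c 1) 1

noncomputable instance {K ι : Type} [Field K] : IsDomain (LaurentPoly K ι) :=
  NoZeroDivisors.to_isDomain _

/-! ### The ground field `𝕂 = ℚ(q)` -/

/-- The ground field `𝕂 = ℚ(q)`. -/
noncomputable abbrev QQq : Type := RatFunc ℚ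

/-- The variable `q ∈ 𝕂`. -/
noncomputable def qq : QQq := RatFunc.X

section SetupB

variable {I : Type} [Fintype I] [LinearOrder I] [DecidableEq I]

/-- The function `ζ_{ij}`, evaluated in a field `L` (at an invertible element `w`),
where `qL` is the image of `q` in `L` and `d` is the symmetrized Cartan matrix. -/
noncomputable def zetaVal (d : I → I → ℤ) {L : Type} [Field L] (qL : L) (i j : I) (w : L) : L :=
  if i < j then qL ^ (-(d i j)) - w
  else if i = j then (qL ^ (-(d i j)) - w) / (1 - w)
  else 1 - qL ^ (-(d i j)) * w⁻¹

variable (n : I → ℕ)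

/-- The space `𝒱_𝐧` of color-symmetric Laurent polynomials over a field `K`. -/
noncomputable def VSymF (K : Type) [Field K] :
    Submodule K (LaurentPoly K (Σ i : I, Fin (n i))) where
  carrier := {F | ∀ σ : Equiv.Perm (Σ i : I, Fin (n i)),
    (∀ c, (σ c).1 = c.1) → lpRename (K := K) σ F = F}
  add_mem' := by intro F G hF hG σ hσ; simp [map_add, hF σ hσ, hG σ hσ]
  zero_mem' := by intro σ hσ; simp
  smul_mem' := by intro c F hF σ hσ; simp [map_smul, hF σ hσ]

/-- The space `V_𝐱` of Laurent polynomials over a field `K`, symmetric under exchanging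
`z_{ia}` and `z_{ib}` whenever `x_{ia} = x_{ib}`. -/
noncomputable def VxSymF (K : Type) [Field K] (x : (Σ i : I, Fin (n i)) → QQqˣ) :
    Submodule K (LaurentPoly K (Σ i : I, Fin (n i))) where
  carrier := {F | ∀ σ : Equiv.Perm (Σ i : I, Fin (n i)),
    (∀ c, (σ c).1 = c.1 ∧ x (σ c) = x c) → lpRename (K := K) σ F = F}
  add_mem' := by intro F G hF hG σ hσ; simp [map_add, hF σ hσ, hG σ hσ]
  zero_mem' := by intro σ hσ; simp
  smul_mem' := by intro c F hF σ hσ; simp [map_smul, hF σ hσ]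

variable {n}

/-- The residue conditions defining `Θ(ψ)_𝐱 ⊆ 𝒱_𝐧`, where `psiv i w` is the evaluation of
`ψ_i(z)/z` at `z = w` (so that `psiv` encodes the highest ℓ-weight `ψ`). -/
noncomputable def ThetaPsiCond (d : I → I → ℤ) (x : (Σ i : I, Fin (n i)) → QQqˣ)
    (psiv : I → IterLaurent QQq (∑ i, n i) → IterLaurent QQq (∑ i, n i))
    (F : LaurentPoly QQq (Σ i : I, Fin (n i))) : Prop :=
  ∀ (e : Fin (∑ i, n i) ≃ (Σ i : I, Fin (n i))) (dd : Fin (∑ i, n i) → ℤ),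
    ires QQq (∑ i, n i) (
      (∏ a, (constIL QQq (∑ i, n i) ((x (e a) : QQq)) * (1 + tvar QQq (∑ i, n i) a)) ^ dd a) *
      lpEval (constIL QQq (∑ i, n i))
        (fun c => constIL QQq (∑ i, n i) ((x c : QQq)) * (1 + tvar QQq (∑ i, n i) (e.symm c))) F *
      (∏ a, psiv (e a).1
        (constIL QQq (∑ i, n i) ((x (e a) : QQq)) * (1 + tvar QQq (∑ i, n i) a))) *
      ∏ p ∈ Finset.filter (fun p : Fin (∑ i, n i) × Fin (∑ i, n i) => p.1 < p.2) Finset.univ,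
        (zetaVal d (constIL QQq (∑ i, n i) qq) (e p.2).1 (e p.1).1
          ((constIL QQq (∑ i, n i) ((x (e p.2) : QQq)) * (1 + tvar QQq (∑ i, n i) p.2)) /
           (constIL QQq (∑ i, n i) ((x (e p.1) : QQq)) * (1 + tvar QQq (∑ i, n i) p.1))))⁻¹) = 0

/-- The value of `ψ_i(z)/z` at `z = w`, for a highest ℓ-weight with data `c`, `l`, `m`
(zeroes of order `l_{i,γ}` and poles of order `m_{i,γ}` at `γ ∈ 𝕂*`). -/
noncomputable def psiOverZVal {L : Type} [Field L] (φ : QQq →+* L)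
    (c : I → QQqˣ) (l m : I → QQqˣ →₀ ℕ) (i : I) (w : L) : L :=
  φ (c i) * ((l i).prod fun γ k => (1 - φ (γ : QQq) / w) ^ (k : ℤ)) *
    ((m i).prod fun γ k => (1 - φ (γ : QQq) / w) ^ (-(k : ℤ))) / w

open Classical in
/-- The set `Θ_𝐱^{𝐦'} ⊆ V_𝐱` (over `ℚ`). -/
noncomputable def ThetaX (d : I → I → ℤ) (x : (Σ i : I, Fin (n i)) → QQqˣ)
    (m' : (Σ i : I, Fin (n i)) → ℤ) : Set (LaurentPoly ℚ (Σ i : I, Fin (n i))) :=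
  {F | F ∈ VxSymF n ℚ x ∧
    ∀ (e : Fin (∑ i, n i) ≃ (Σ i : I, Fin (n i))) (dd : Fin (∑ i, n i) → ℤ),
      ires ℚ (∑ i, n i) (
        (∏ a, (1 + tvar ℚ (∑ i, n i) a) ^ dd a) *
        lpEval (constIL ℚ (∑ i, n i)) (fun c => 1 + tvar ℚ (∑ i, n i) (e.symm c)) F *
        (∏ p ∈ Finset.filter (fun p : Fin (∑ i, n i) × Fin (∑ i, n i) => p.1 < p.2) Finset.univ,
          (tvar ℚ (∑ i, n i) p.2 - tvar ℚ (∑ i, n i) p.1) ^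
            (((if (e p.1).1 = (e p.2).1 ∧ x (e p.1) = x (e p.2) then 1 else 0) : ℤ) -
             ((if (x (e p.1) : QQq) = (x (e p.2) : QQq) * qq ^ d (e p.1).1 (e p.2).1
                then 1 else 0) : ℤ))) *
        ∏ a, tvar ℚ (∑ i, n i) a ^ (-(m' (e a)))) = 0}

/-- Extension of coefficients from `ℚ` to `𝕂` of a Laurent polynomial. -/
noncomputable def extQK {ι : Type} (F : LaurentPoly ℚ ι) : LaurentPoly QQq ι :=
  AddMonoidAlgebra.ofCoeff (Finsupp.mapRange (algebraMap ℚ QQq) (map_zero _) F.coeff)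

/-- Rescaling of variables `z_{ia} ↦ x_{ia}·z_{ia}` of a Laurent polynomial over `𝕂`. -/
noncomputable def rescale {ι : Type} (x : ι → QQqˣ) (F : LaurentPoly QQq ι) :
    LaurentPoly QQq ι :=
  AddMonoidAlgebra.ofCoeff
    (F.coeff.sum fun dd c => Finsupp.single dd (c * dd.prod fun a k => (x a : QQq) ^ k))

end SetupB

/-! ### ℓ-weights with zeroes and poles in `q^ℤ` -/

/-- `q` as a unit of `𝕂`. -/
noncomputable def qUnit : QQqˣ := Units.mk0 qq (by simpa [qq] using RatFunc.X_ne_zero)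

/-- Conversion of exponent data indexed by `s ∈ ℤ` to exponent data indexed by `γ = q^s ∈ 𝕂*`. -/
noncomputable def gammaOfZ (lz : ℤ →₀ ℕ) : QQqˣ →₀ ℕ :=
  Finsupp.mapDomain (fun s : ℤ => qUnit ^ s) lz

/-- The element `Δ_𝐥 = ∏_{i∈I}∏_{a=1}^{n_i}∏_{s∈ℤ} (1 − q^s/z_{ia})^{l_{i,s}} ∈ 𝒱_𝐧`. -/
noncomputable def deltaL {I : Type} [Fintype I] [DecidableEq I] {n : I → ℕ} (l : I → ℤ →₀ ℕ) :
    LaurentPoly QQq (Σ i : I, Fin (n i)) :=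
  ∏ cc : (Σ i : I, Fin (n i)), (l cc.1).prod fun s k =>
    ((1 : LaurentPoly QQq (Σ i : I, Fin (n i))) -
      AddMonoidAlgebra.single (Finsupp.single cc (-1 : ℤ)) (qq ^ s)) ^ k

/-- The shuffle algebra graded piece `S_𝐧 ⊆ 𝒱_𝐧`: the `𝕂`-span of the symmetrizations
`Sym[ z_1^{d_1}⋯z_n^{d_n} ∏_{a<b} ζ_{i_b i_a}(z_b/z_a) ]`. -/
noncomputable def shuffleSpan {I : Type} [Fintype I] [LinearOrder I]
    (d : I → I → ℤ) (n : I → ℕ) :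
    Submodule QQq (LaurentPoly QQq (Σ i : I, Fin (n i))) :=
  Submodule.span QQq
    {F : LaurentPoly QQq (Σ i : I, Fin (n i)) |
      ∃ (e : Fin (∑ i, n i) ≃ (Σ i : I, Fin (n i))) (dd : Fin (∑ i, n i) → ℤ),
        algebraMap (LaurentPoly QQq (Σ i : I, Fin (n i)))
            (FractionRing (LaurentPoly QQq (Σ i : I, Fin (n i)))) F =
          ∑ σ ∈ Finset.filter (fun σ : Equiv.Perm (Σ i : I, Fin (n i)) =>
              ∀ cc, (σ cc).1 = cc.1) Finset.univ,
            (∏ a, (algebraMap (LaurentPoly QQq (Σ i : I, Fin (n i)))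
                (FractionRing (LaurentPoly QQq (Σ i : I, Fin (n i))))
                (lpVar (σ (e a)))) ^ dd a) *
            ∏ p ∈ Finset.filter
                (fun p : Fin (∑ i, n i) × Fin (∑ i, n i) => p.1 < p.2) Finset.univ,
              zetaVal d
                (algebraMap (LaurentPoly QQq (Σ i : I, Fin (n i)))
                  (FractionRing (LaurentPoly QQq (Σ i : I, Fin (n i))))
                  (algebraMap QQq (LaurentPoly QQq (Σ i : I, Fin (n i))) qq))
                (e p.2).1 (e p.1).1
                (algebraMap (LaurentPoly QQq (Σ i : I, Fin (n i)))
                    (FractionRing (LaurentPoly QQq (Σ i : I, Fin (n i))))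
                    (lpVar (σ (e p.2))) /
                  algebraMap (LaurentPoly QQq (Σ i : I, Fin (n i)))
                    (FractionRing (LaurentPoly QQq (Σ i : I, Fin (n i))))
                    (lpVar (σ (e p.1))))}

/-!
Write `ψ_i(z) = c_i · L_i(z) / ψ^den_i(z)` with `L_i(z) = ∏_s (1 - q^s/z)^{l_{i,s}}`. For every
listing of `𝐱`, the product `∏_a L_{i_a}(z_a)` is the evaluation of `Δ_𝐥`, so the residue integrand
testing `F` against `ψ` is the nonzero constant `∏_a c_{i_a}` times the integrand testing `Δ_𝐥·F`
against `1/ψ^den`. As `Δ_𝐥` is a nonzero color-symmetric element of a domain, `F` is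
color-symmetric iff `Δ_𝐥·F` is. Hence `F ∈ Θ(ψ)_𝐱 ↔ Δ_𝐥·F ∈ Θ(1/ψ^den)_𝐱`, and multiplication by
`Δ_𝐥` maps `S_𝐧` onto `Δ_𝐥·S_𝐧` with `S_𝐧 ∩ Θ(ψ)_𝐱` as the preimage of `Δ_𝐥·S_𝐧 ∩ Θ(1/ψ^den)_𝐱`.
-/

section IteratedResidue

variable {K : Type} [Field K]

theorem ires_add : ∀ (n : ℕ) (a b : IterLaurent K n), ires K n (a + b) = ires K n a + ires K n b
  | 0, _, _ => rfl
  | n + 1, a, b => by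
    show ires K n (((a + b : LaurentSeries (IterLaurent K n))).coeff (-1)) = _
    erw [HahnSeries.coeff_add]
    exact ires_add n _ _

theorem ires_constIL_mul : ∀ (n : ℕ) (k : K) (a : IterLaurent K n),
    ires K n (constIL K n k * a) = k * ires K n a
  | 0, _, _ => rfl
  | n + 1, k, a => by
    show ires K n (((constIL K (n + 1) k * a : LaurentSeries (IterLaurent K n))).coeff (-1)) = _
    rw [show constIL K (n + 1) k = HahnSeries.single 0 (constIL K n k) from rfl]
    erw [HahnSeries.coeff_single_zero_mul]
    exact ires_constIL_mul n k _

theorem ires_zero (n : ℕ) : ires K n 0 = 0 := by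
  simpa using ires_constIL_mul n (0 : K) 0

theorem ires_constIL_mul_eq_zero_iff (n : ℕ) {k : K} (hk : k ≠ 0) (a : IterLaurent K n) :
    ires K n (constIL K n k * a) = 0 ↔ ires K n a = 0 := by
  rw [ires_constIL_mul, mul_eq_zero, or_iff_right hk]

theorem one_add_tvar_ne_zero : ∀ (n : ℕ) (a : Fin n), 1 + tvar K n a ≠ 0
  | n + 1, ⟨0, _⟩ => by
    show (1 + (HahnSeries.single (1 : ℤ) 1 : LaurentSeries (IterLaurent K n))) ≠ 0
    intro h
    have h0 := congrArg (fun y : LaurentSeries (IterLaurent K n) => y.coeff 0) h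
    simp at h0
  | n + 1, ⟨a + 1, ha⟩ => by
    show (1 + (HahnSeries.C (tvar K n ⟨a, by omega⟩) : LaurentSeries (IterLaurent K n))) ≠ 0
    intro h
    have hC : (HahnSeries.C (1 + tvar K n ⟨a, by omega⟩) : LaurentSeries (IterLaurent K n)) = 0 := by
      rw [map_add, map_one]; exact h
    exact one_add_tvar_ne_zero n _ ((map_eq_zero_iff _ HahnSeries.C_injective).mp hC)

theorem constIL_mul_one_add_tvar_ne_zero (n : ℕ) {y : K} (hy : y ≠ 0) (a : Fin n) :
    constIL K n y * (1 + tvar K n a) ≠ 0 :=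
  mul_ne_zero ((map_ne_zero _).mpr hy) (one_add_tvar_ne_zero n a)

end IteratedResidue

section Evaluation

variable {K L ι : Type} [CommRing K] [Field L]

noncomputable def monomialEval (v : ι → L) (hv : ∀ a, v a ≠ 0) :
    Multiplicative (ι →₀ ℤ) →* L where
  toFun dd := (Multiplicative.toAdd dd).prod fun a k => v a ^ k
  map_one' := by simp
  map_mul' _ _ := Finsupp.prod_add_index' (fun _ => zpow_zero _) fun a _ _ => zpow_add₀ (hv a) _ _

noncomputable def lpEvalRingHom (φ : K →+* L) (v : ι → L) (hv : ∀ a, v a ≠ 0) :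
    LaurentPoly K ι →+* L :=
  AddMonoidAlgebra.liftNCRingHom φ (monomialEval v hv) fun _ _ => Commute.all _ _

theorem lpEvalRingHom_apply (φ : K →+* L) (v : ι → L) (hv : ∀ a, v a ≠ 0) (F : LaurentPoly K ι) :
    lpEvalRingHom φ v hv F = lpEval φ v F := rfl

theorem lpEval_add (φ : K →+* L) (v : ι → L) (hv : ∀ a, v a ≠ 0) (F G : LaurentPoly K ι) :
    lpEval φ v (F + G) = lpEval φ v F + lpEval φ v G :=
  map_add (lpEvalRingHom φ v hv) F G

theorem lpEval_mul (φ : K →+* L) (v : ι → L) (hv : ∀ a, v a ≠ 0) (F G : LaurentPoly K ι) :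
    lpEval φ v (F * G) = lpEval φ v F * lpEval φ v G :=
  map_mul (lpEvalRingHom φ v hv) F G

theorem lpEval_smul (φ : K →+* L) (v : ι → L) (hv : ∀ a, v a ≠ 0) (k : K) (F : LaurentPoly K ι) :
    lpEval φ v (k • F) = φ k * lpEval φ v F :=
  AddMonoidAlgebra.liftNC_smul φ (monomialEval v hv) k F

theorem lpEval_single (φ : K →+* L) (v : ι → L) (dd : ι →₀ ℤ) (a : K) :
    lpEval φ v (AddMonoidAlgebra.single dd a) = φ a * dd.prod fun c k => v c ^ k := by
  simp [lpEval, AddMonoidAlgebra.coeff_single, Finsupp.sum_single_index]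

end Evaluation

section Delta


theorem one_sub_single_ne_zero {I : Type} {n : I → ℕ} (cc : Σ i : I, Fin (n i)) (a : QQq) :
    (1 : LaurentPoly QQq (Σ i : I, Fin (n i))) -
      AddMonoidAlgebra.single (Finsupp.single cc (-1 : ℤ)) a ≠ 0 := by
  rw [sub_ne_zero, AddMonoidAlgebra.one_def]
  intro h
  rcases AddMonoidAlgebra.single_inj.mp h with ⟨hdeg, _⟩ | ⟨h1, _⟩
  · simp at hdeg
  · exact one_ne_zero h1

theorem prod_gammaOfZ {L : Type} [Field L] (φ : QQq →+* L) (lz : ℤ →₀ ℕ) (w : L) :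
    ((gammaOfZ lz).prod fun γ k => (1 - φ (γ : QQq) / w) ^ (k : ℤ)) =
      lz.prod fun s k => (1 - φ (qq ^ s) * w⁻¹) ^ k := by
  rw [gammaOfZ, Finsupp.prod_mapDomain_index (fun _ => by simp)
    fun _ _ _ => by simp only [zpow_natCast, pow_add]]
  refine Finsupp.prod_congr fun s _ => ?_
  rw [Units.val_zpow_eq_zpow_val, zpow_natCast, div_eq_mul_inv]
  rfl

theorem psiOverZVal_eq_mul {L : Type} [Field L] {I : Type} (φ : QQq →+* L) (c : I → QQqˣ) (l m : I → ℤ →₀ ℕ) (i : I) (w : L) :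
    psiOverZVal φ c (fun i => gammaOfZ (l i)) (fun i => gammaOfZ (m i)) i w =
      φ (c i) * ((l i).prod fun s k => (1 - φ (qq ^ s) * w⁻¹) ^ k) *
        psiOverZVal φ (fun _ => 1) (fun _ => 0) (fun i => gammaOfZ (m i)) i w := by
  simp only [psiOverZVal, prod_gammaOfZ, Units.val_one, map_one, Finsupp.prod_zero_index]
  ring

variable {I : Type} [Fintype I] [DecidableEq I] {n : I → ℕ}

theorem deltaL_ne_zero (l : I → ℤ →₀ ℕ) : deltaL (n := n) l ≠ 0 :=
  Finset.prod_ne_zero_iff.mpr fun cc _ => Finset.prod_ne_zero_iff.mpr fun _ _ =>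
    pow_ne_zero _ (one_sub_single_ne_zero cc _)

theorem lpRename_deltaL (l : I → ℤ →₀ ℕ) (σ : Equiv.Perm (Σ i : I, Fin (n i)))
    (hσ : ∀ cc, (σ cc).1 = cc.1) :
    lpRename (K := QQq) σ (deltaL (n := n) l) = deltaL l := by
  unfold deltaL
  rw [map_prod]
  refine Eq.trans (Finset.prod_congr rfl fun cc _ => ?_) (Equiv.prod_comp σ fun cc =>
    (l cc.1).prod fun s k => ((1 : LaurentPoly QQq (Σ i : I, Fin (n i))) -
      AddMonoidAlgebra.single (Finsupp.single cc (-1 : ℤ)) (qq ^ s)) ^ k)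
  rw [map_finsuppProd, hσ cc]
  refine Finsupp.prod_congr fun s _ => ?_
  simp only [map_pow, map_sub, map_one, lpRename, AddMonoidAlgebra.domCongr_single,
    Finsupp.domCongr_apply, Finsupp.equivMapDomain_single]

theorem mem_VSymF_iff_deltaL_mul (l : I → ℤ →₀ ℕ) (F : LaurentPoly QQq (Σ i : I, Fin (n i))) :
    F ∈ VSymF n QQq ↔ deltaL l * F ∈ VSymF n QQq := by
  refine forall_congr' fun σ => forall_congr' fun hσ => ?_
  rw [map_mul, lpRename_deltaL l σ hσ]
  exact (mul_right_inj' (deltaL_ne_zero l)).symm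

variable {L : Type} [Field L]

theorem lpEval_deltaL (φ : QQq →+* L) (v : (Σ i : I, Fin (n i)) → L) (hv : ∀ cc, v cc ≠ 0)
    (l : I → ℤ →₀ ℕ) :
    lpEval φ v (deltaL (n := n) l) =
      ∏ cc, (l cc.1).prod fun s k => (1 - φ (qq ^ s) * (v cc)⁻¹) ^ k := by
  rw [← lpEvalRingHom_apply φ v hv, deltaL, map_prod]
  refine Finset.prod_congr rfl fun cc _ => ?_
  rw [Finsupp.prod, Finsupp.prod, map_prod]
  refine Finset.prod_congr rfl fun s _ => ?_
  rw [map_pow, map_sub, map_one, lpEvalRingHom_apply, lpEval_single,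
    Finsupp.prod_single_index (by simp), zpow_neg_one]

theorem prod_psiOverZVal_eq (φ : QQq →+* L) (c : I → QQqˣ) (l m : I → ℤ →₀ ℕ)
    (v : (Σ i : I, Fin (n i)) → L) (hv : ∀ cc, v cc ≠ 0) :
    ∏ cc, psiOverZVal φ c (fun i => gammaOfZ (l i)) (fun i => gammaOfZ (m i)) cc.1 (v cc) =
      φ (∏ cc : Σ i : I, Fin (n i), (c cc.1 : QQq)) * lpEval φ v (deltaL l) *
        ∏ cc, psiOverZVal φ (fun _ => 1) (fun _ => 0) (fun i => gammaOfZ (m i)) cc.1 (v cc) := by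
  simp only [psiOverZVal_eq_mul, Finset.prod_mul_distrib, map_prod, lpEval_deltaL φ v hv]

end Delta

section Theta

variable {I : Type} [Fintype I] [LinearOrder I] {n : I → ℕ}

theorem thetaPsiCond_iff_deltaL_mul (d : I → I → ℤ) (x : (Σ i : I, Fin (n i)) → QQqˣ)
    (c : I → QQqˣ) (l m : I → ℤ →₀ ℕ) (F : LaurentPoly QQq (Σ i : I, Fin (n i))) :
    ThetaPsiCond d x (psiOverZVal (constIL QQq (∑ i, n i)) c (fun i => gammaOfZ (l i))
        (fun i => gammaOfZ (m i))) F ↔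
      ThetaPsiCond d x (psiOverZVal (constIL QQq (∑ i, n i)) (fun _ => 1) (fun _ => 0)
        (fun i => gammaOfZ (m i))) (deltaL l * F) := by
  unfold ThetaPsiCond
  generalize ∑ i, n i = N
  refine forall_congr' fun e => forall_congr' fun dd => ?_
  set v : (Σ i : I, Fin (n i)) → IterLaurent QQq N :=
    fun cc => constIL QQq N (x cc) * (1 + tvar QQq N (e.symm cc))
  have hv : ∀ cc, v cc ≠ 0 := fun cc => constIL_mul_one_add_tvar_ne_zero N (x cc).ne_zero _
  have hk : ∏ cc : Σ i : I, Fin (n i), (c cc.1 : QQq) ≠ 0 :=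
    Finset.prod_ne_zero_iff.mpr fun cc _ => (c cc.1).ne_zero
  have reindex : ∀ psiv : I → IterLaurent QQq N → IterLaurent QQq N,
      ∏ a, psiv (e a).1 (constIL QQq N (x (e a)) * (1 + tvar QQq N a)) =
        ∏ cc, psiv cc.1 (v cc) := fun psiv =>
    (Finset.prod_congr rfl fun a _ => by simp [v]).trans (e.prod_comp fun cc => psiv cc.1 (v cc))
  rw [reindex, reindex, prod_psiOverZVal_eq _ c l m v hv, lpEval_mul _ v hv]
  refine Iff.trans ?_ (ires_constIL_mul_eq_zero_iff N hk _)
  ring_nf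

/-- `Θ(ψ)_𝐱`, where `psiv` evaluates `ψ_i(z)/z`. -/
noncomputable def thetaSubmodule (d : I → I → ℤ) (x : (Σ i : I, Fin (n i)) → QQqˣ)
    (psiv : I → IterLaurent QQq (∑ i, n i) → IterLaurent QQq (∑ i, n i)) :
    Submodule QQq (LaurentPoly QQq (Σ i : I, Fin (n i))) where
  carrier := {F | F ∈ VSymF n QQq ∧ ThetaPsiCond d x psiv F}
  zero_mem' := ⟨Submodule.zero_mem _, fun e dd => by simp [lpEval, ires_zero]⟩
  add_mem' := by
    rintro F G ⟨hFsym, hF⟩ ⟨hGsym, hG⟩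
    refine ⟨Submodule.add_mem _ hFsym hGsym, fun e dd => ?_⟩
    have hv : ∀ cc, constIL QQq _ (x cc : QQq) * (1 + tvar QQq _ (e.symm cc)) ≠ 0 :=
      fun cc => constIL_mul_one_add_tvar_ne_zero _ (x cc).ne_zero _
    rw [lpEval_add _ _ hv, mul_add, add_mul, add_mul, ires_add, hF e dd, hG e dd, add_zero]
  smul_mem' := by
    rintro k F ⟨hFsym, hF⟩
    refine ⟨Submodule.smul_mem _ k hFsym, fun e dd => ?_⟩
    have hv : ∀ cc, constIL QQq _ (x cc : QQq) * (1 + tvar QQq _ (e.symm cc)) ≠ 0 :=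
      fun cc => constIL_mul_one_add_tvar_ne_zero _ (x cc).ne_zero _
    rw [lpEval_smul _ _ hv, show ∀ P E Ψ Z : IterLaurent QQq (∑ i, n i),
      P * (constIL QQq _ k * E) * Ψ * Z = constIL QQq _ k * (P * E * Ψ * Z) from
        fun _ _ _ _ => by ring, ires_constIL_mul, hF e dd, mul_zero]

end Theta

section QuotientEquiv

variable {R M N : Type*} [Ring R] [AddCommGroup M] [AddCommGroup N] [Module R M] [Module R N]

theorem Submodule.ker_mkQ_comp_submoduleMap_of_mem_iff (f : M →ₗ[R] N) (S P : Submodule R M)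
    (Q : Submodule R N) (h : ∀ y ∈ S, y ∈ P ↔ f y ∈ Q) :
    LinearMap.ker ((Q.comap (S.map f).subtype).mkQ ∘ₗ f.submoduleMap S) = P.comap S.subtype := by
  ext y
  simpa using (h y y.2).symm

noncomputable def Submodule.quotEquivMapQuotOfMemIff (f : M →ₗ[R] N) (S P : Submodule R M)
    (Q : Submodule R N) (h : ∀ y ∈ S, y ∈ P ↔ f y ∈ Q) :
    (S ⧸ P.comap S.subtype) ≃ₗ[R] (S.map f ⧸ Q.comap (S.map f).subtype) :=
  (Submodule.quotEquivOfEq _ _ (ker_mkQ_comp_submoduleMap_of_mem_iff f S P Q h).symm).trans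
    (LinearMap.quotKerEquivOfSurjective _
      ((Submodule.mkQ_surjective _).comp (f.submoduleMap_surjective S)))

theorem Submodule.quotEquivMapQuotOfMemIff_mk (f : M →ₗ[R] N) (S P : Submodule R M)
    (Q : Submodule R N) (h : ∀ y ∈ S, y ∈ P ↔ f y ∈ Q) (y : S) :
    quotEquivMapQuotOfMemIff f S P Q h (Submodule.Quotient.mk y) =
      Submodule.Quotient.mk ⟨f y, Submodule.mem_map_of_mem y.2⟩ :=
  rfl

end QuotientEquiv

theorem statement10_general {I : Type} [Fintype I] [LinearOrder I]
    (d : I → I → ℤ)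
    (n : I → ℕ)
    (c : I → QQqˣ) (l m : I → ℤ →₀ ℕ)
    (x : (Σ i : I, Fin (n i)) → QQqˣ) :
    ∃ Θ1 Θ2 : Submodule QQq (LaurentPoly QQq (Σ i : I, Fin (n i))),
      (Θ1 : Set (LaurentPoly QQq (Σ i : I, Fin (n i)))) =
        {F | F ∈ VSymF n QQq ∧ ThetaPsiCond d x
          (psiOverZVal (constIL QQq (∑ i, n i)) c (fun i => gammaOfZ (l i))
            (fun i => gammaOfZ (m i))) F} ∧
      (Θ2 : Set (LaurentPoly QQq (Σ i : I, Fin (n i)))) =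
        {F | F ∈ VSymF n QQq ∧ ThetaPsiCond d x
          (psiOverZVal (constIL QQq (∑ i, n i)) (fun _ => 1) (fun _ => 0)
            (fun i => gammaOfZ (m i))) F} ∧
      ∃ iso : (shuffleSpan d n ⧸ Θ1.comap (shuffleSpan d n).subtype) ≃ₗ[QQq]
          ((Submodule.map (LinearMap.mulLeft QQq (deltaL l)) (shuffleSpan d n)) ⧸
            Θ2.comap
              (Submodule.map (LinearMap.mulLeft QQq (deltaL l)) (shuffleSpan d n)).subtype),
        ∀ F : shuffleSpan d n,
          iso (Submodule.Quotient.mk F) =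
            Submodule.Quotient.mk ⟨deltaL l * (F : LaurentPoly QQq (Σ i : I, Fin (n i))),
              Submodule.mem_map_of_mem F.2⟩ := by
  have mem_iff : ∀ F, F ∈ thetaSubmodule d x (psiOverZVal (constIL QQq (∑ i, n i)) c
        (fun i => gammaOfZ (l i)) (fun i => gammaOfZ (m i))) ↔
      deltaL l * F ∈ thetaSubmodule d x (psiOverZVal (constIL QQq (∑ i, n i)) (fun _ => 1)
        (fun _ => 0) (fun i => gammaOfZ (m i))) := fun F =>
    and_congr (mem_VSymF_iff_deltaL_mul l F) (thetaPsiCond_iff_deltaL_mul d x c l m F)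
  exact ⟨_, _, rfl, rfl, Submodule.quotEquivMapQuotOfMemIff _ _ _ _ fun F _ => mem_iff F,
    Submodule.quotEquivMapQuotOfMemIff_mk _ _ _ _ _⟩

/-- Suppose `ψ` has all zeroes and poles in `q^ℤ` and all entries of `𝐱`
are integer powers of `q`. Then multiplication by `Δ_𝐥` induces a `𝕂`-linear isomorphism
`S_𝐧/(S_𝐧 ∩ Θ(ψ)_𝐱) ≅ (Δ_𝐥·S_𝐧)/((Δ_𝐥·S_𝐧) ∩ Θ(1/ψ^den)_𝐱)`. -/
theorem statement10 {I : Type} [Fintype I] [LinearOrder I]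
    (d : I → I → ℤ)
    (hdsym : ∀ i j, d i j = d j i) (hdpos : ∀ i, 0 < d i i) (hdeven : ∀ i, Even (d i i))
    (hdneg : ∀ i j, i ≠ j → d i j ≤ 0) (hdint : ∀ i j, d i i ∣ 2 * d i j)
    (n : I → ℕ)
    (c : I → QQqˣ) (l m : I → ℤ →₀ ℕ)
    (x : (Σ i : I, Fin (n i)) → QQqˣ)
    (hx : ∀ cc : Σ i : I, Fin (n i), ∃ s : ℤ, (x cc : QQq) = qq ^ s) :
    ∃ Θ1 Θ2 : Submodule QQq (LaurentPoly QQq (Σ i : I, Fin (n i))),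
      (Θ1 : Set (LaurentPoly QQq (Σ i : I, Fin (n i)))) =
        {F | F ∈ VSymF n QQq ∧ ThetaPsiCond d x
          (psiOverZVal (constIL QQq (∑ i, n i)) c (fun i => gammaOfZ (l i))
            (fun i => gammaOfZ (m i))) F} ∧
      (Θ2 : Set (LaurentPoly QQq (Σ i : I, Fin (n i)))) =
        {F | F ∈ VSymF n QQq ∧ ThetaPsiCond d x
          (psiOverZVal (constIL QQq (∑ i, n i)) (fun _ => 1) (fun _ => 0)
            (fun i => gammaOfZ (m i))) F} ∧
      ∃ iso : (shuffleSpan d n ⧸ Θ1.comap (shuffleSpan d n).subtype) ≃ₗ[QQq]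
          ((Submodule.map (LinearMap.mulLeft QQq (deltaL l)) (shuffleSpan d n)) ⧸
            Θ2.comap
              (Submodule.map (LinearMap.mulLeft QQq (deltaL l)) (shuffleSpan d n)).subtype),
        ∀ F : shuffleSpan d n,
          iso (Submodule.Quotient.mk F) =
            Submodule.Quotient.mk ⟨deltaL l * (F : LaurentPoly QQq (Σ i : I, Fin (n i))),
              Submodule.mem_map_of_mem F.2⟩ :=
  statement10_general d n c l m x
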